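/- For real q ≥ 2 and integers n ≥ m ≥ 0, |∏_{i≥1}(1 + 1/(-q)^i) - ∑_{j=0}^{n-m} (-1)^{\binom{j+1}{2}} / ((q^j - (-1)^j)⋯(q + 1))| ≤ ∑_{j ≥ n-m+1} q^{-\binom{j+1}{2}} ≤ 2 q^{-\binom{n-m+2}{2}}. -/

import Mathlib

/-!
Euler's identity `∏_{i ≥ 1} (1 + x z^i) = ∑_j z^{\binom{j+1}{2}} x^j / ((1 - z) ⋯ (1 - z^j))` holds
for `‖z‖ < 1`: the right-hand side `f x` satisfies `f x = (1 + x z) f (x z)` coefficientwise, so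
`f x = (∏_{i ≤ M} (1 + x z^i)) f (x z^M)`, and `f (x z^M) → f 0 = 1`.  At `z = -1/q`, `x = 1` the
`j`-th term is the `j`-th summand of the statement, and for `q ≥ 2` the denominators
`∏ (1 - (-1/q)^k)` are at least `1`, so the `j`-th term is at most `q^{-\binom{j+1}{2}}`.  Finally
`\binom{N+j}{2} ≥ \binom{N}{2} + j` compares the tail of these bounds with a geometric series.
-/

open Finset Filter Topology Metric

theorem Nat.succ_choose_two (n : ℕ) : (n + 1).choose 2 = n.choose 2 + n := by
  rw [Nat.choose_succ_succ', Nat.choose_one_right, add_comm]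

theorem Finset.prod_Icc_one_pow_eq_pow_choose_two {M : Type*} [CommMonoid M] (w : M) (j : ℕ) :
    ∏ k ∈ Icc 1 j, w ^ k = w ^ (j + 1).choose 2 := by
  induction j with
  | zero => simp
  | succ j ih => rw [prod_Icc_succ_top (by omega), ih, ← pow_add, Nat.succ_choose_two (j + 1)]

section Field

variable {K : Type*} [Field K]

noncomputable def eulerCoeff (z : K) (j : ℕ) : K :=
  z ^ (j + 1).choose 2 / ∏ k ∈ Icc 1 j, (1 - z ^ k)

theorem eulerCoeff_succ_mul {z : K} {j : ℕ} (h : 1 - z ^ (j + 1) ≠ 0) :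
    eulerCoeff z (j + 1) * (1 - z ^ (j + 1)) = z ^ (j + 1) * eulerCoeff z j := by
  rw [eulerCoeff, eulerCoeff, prod_Icc_succ_top (by omega), Nat.succ_choose_two, pow_add,
    div_mul_eq_mul_div, mul_div_mul_right _ _ h, mul_comm (z ^ _), mul_div_assoc]

theorem eulerCoeff_inv_neg {q : K} (hq : q ≠ 0) (j : ℕ) :
    eulerCoeff (-q)⁻¹ j = (-1) ^ (j + 1).choose 2 / ∏ k ∈ Icc 1 j, (q ^ k - (-1) ^ k) := by
  have hpow : ∀ k : ℕ, (-q)⁻¹ ^ k = (-1) ^ k / q ^ k := fun k => by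
    rw [inv_neg, neg_pow, inv_pow, div_eq_mul_inv]
  have hfactor : ∀ k : ℕ, 1 - (-q)⁻¹ ^ k = (q ^ k - (-1) ^ k) / q ^ k := fun k => by
    rw [hpow, sub_div, div_self (pow_ne_zero k hq)]
  rw [eulerCoeff, prod_congr rfl fun k _ => hfactor k, prod_div_distrib,
    prod_Icc_one_pow_eq_pow_choose_two, hpow, div_div_eq_mul_div,
    div_mul_cancel₀ _ (pow_ne_zero _ hq)]

end Field

section Normed

variable {𝕜 : Type*} [NormedField 𝕜] {z : 𝕜}

theorem one_sub_norm_le_norm_one_sub_pow (hz : ‖z‖ ≤ 1) {k : ℕ} (hk : k ≠ 0) :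
    1 - ‖z‖ ≤ ‖1 - z ^ k‖ :=
  calc 1 - ‖z‖ ≤ 1 - ‖z‖ ^ k := by gcongr; exact pow_le_of_le_one (norm_nonneg z) hz hk
    _ = ‖(1 : 𝕜)‖ - ‖z ^ k‖ := by rw [norm_one, norm_pow]
    _ ≤ ‖1 - z ^ k‖ := norm_sub_norm_le _ _

theorem one_sub_pow_ne_zero_of_norm_lt_one (hz : ‖z‖ < 1) {k : ℕ} (hk : k ≠ 0) :
    1 - z ^ k ≠ 0 :=
  norm_pos_iff.mp <| (sub_pos.mpr hz).trans_le (one_sub_norm_le_norm_one_sub_pow hz.le hk)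

theorem summable_norm_eulerCoeff_mul_pow (hz : ‖z‖ < 1) (x : 𝕜) :
    Summable fun j => ‖eulerCoeff z j * x ^ j‖ := by
  have hratio : Tendsto (fun j : ℕ => ‖x‖ * ‖z‖ ^ (j + 1) / (1 - ‖z‖)) atTop (𝓝 0) := by
    simpa using (((tendsto_pow_atTop_nhds_zero_of_lt_one (norm_nonneg z) hz).comp
      (tendsto_add_atTop_nat 1)).const_mul ‖x‖).div_const (1 - ‖z‖)
  refine summable_of_ratio_norm_eventually_le (r := 1 / 2) (by norm_num) ?_
  filter_upwards [hratio.eventually_le_const (by norm_num : (0 : ℝ) < 1 / 2)] with j hj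
  have hne := one_sub_pow_ne_zero_of_norm_lt_one hz j.succ_ne_zero
  have hden := one_sub_norm_le_norm_one_sub_pow hz.le j.succ_ne_zero
  have hrec : eulerCoeff z (j + 1) = z ^ (j + 1) / (1 - z ^ (j + 1)) * eulerCoeff z j := by
    rw [eq_comm, div_mul_eq_mul_div, div_eq_iff hne, eulerCoeff_succ_mul hne]
  rw [norm_norm, norm_norm]
  calc ‖eulerCoeff z (j + 1) * x ^ (j + 1)‖
      = ‖x‖ * ‖z‖ ^ (j + 1) / ‖1 - z ^ (j + 1)‖ * ‖eulerCoeff z j * x ^ j‖ := by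
        rw [hrec]; simp only [norm_mul, norm_div, norm_pow]; ring
    _ ≤ ‖x‖ * ‖z‖ ^ (j + 1) / (1 - ‖z‖) * ‖eulerCoeff z j * x ^ j‖ := by gcongr
    _ ≤ 1 / 2 * ‖eulerCoeff z j * x ^ j‖ := by gcongr

noncomputable def eulerSeries (z x : 𝕜) : 𝕜 := ∑' j, eulerCoeff z j * x ^ j

theorem eulerSeries_zero (z : 𝕜) : eulerSeries z 0 = 1 := by
  rw [eulerSeries, tsum_eq_single 0 fun j hj => by simp [hj]]
  simp [eulerCoeff]

variable [CompleteSpace 𝕜]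

theorem summable_eulerCoeff_mul_pow (hz : ‖z‖ < 1) (x : 𝕜) :
    Summable fun j => eulerCoeff z j * x ^ j :=
  (summable_norm_eulerCoeff_mul_pow hz x).of_norm

theorem eulerSeries_eq_one_add_mul_mul (hz : ‖z‖ < 1) (x : 𝕜) :
    eulerSeries z x = (1 + x * z) * eulerSeries z (x * z) := by
  have hterm : ∀ j, eulerCoeff z (j + 1) * x ^ (j + 1) =
      eulerCoeff z (j + 1) * (x * z) ^ (j + 1) + x * z * (eulerCoeff z j * (x * z) ^ j) := by
    intro j
    have h := eulerCoeff_succ_mul (one_sub_pow_ne_zero_of_norm_lt_one hz j.succ_ne_zero)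
    linear_combination x ^ (j + 1) * h
  have hsum := summable_eulerCoeff_mul_pow hz (x * z)
  rw [eulerSeries, eulerSeries, (summable_eulerCoeff_mul_pow hz x).tsum_eq_zero_add,
    hsum.tsum_eq_zero_add, tsum_congr hterm,
    ((summable_nat_add_iff 1).mpr hsum).tsum_add (hsum.mul_left (x * z)), tsum_mul_left,
    hsum.tsum_eq_zero_add]
  ring

theorem eulerSeries_eq_prod_mul (hz : ‖z‖ < 1) (x : 𝕜) (M : ℕ) :
    eulerSeries z x = (∏ i ∈ range M, (1 + x * z ^ (i + 1))) * eulerSeries z (x * z ^ M) := by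
  induction M with
  | zero => simp
  | succ M ih =>
    rw [ih, eulerSeries_eq_one_add_mul_mul hz, prod_range_succ, mul_assoc x, ← pow_succ,
      mul_assoc]

theorem continuousOn_eulerSeries (hz : ‖z‖ < 1) :
    ContinuousOn (eulerSeries z) (closedBall 0 1) := by
  refine continuousOn_tsum (fun j => by fun_prop) (summable_norm_eulerCoeff_mul_pow hz 1)
    fun j y hy => ?_
  rw [mem_closedBall_zero_iff] at hy
  simp only [norm_mul, norm_pow, one_pow, mul_one]
  exact mul_le_of_le_one_right (norm_nonneg _) (pow_le_one₀ (norm_nonneg y) hy)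

theorem tprod_one_add_mul_pow (hz : ‖z‖ < 1) (x : 𝕜) :
    ∏' i, (1 + x * z ^ (i + 1)) = eulerSeries z x := by
  have hmul : Multipliable fun i => 1 + x * z ^ (i + 1) := by
    refine multipliable_one_add_of_summable ?_
    simp_rw [norm_mul, norm_pow]
    exact ((summable_nat_add_iff 1).mpr
      (summable_geometric_of_lt_one (norm_nonneg z) hz)).mul_left _
  have htail : Tendsto (fun M => eulerSeries z (x * z ^ M)) atTop (𝓝 1) := by
    rw [← eulerSeries_zero z]
    refine ((continuousOn_eulerSeries hz).continuousAt
      (closedBall_mem_nhds 0 one_pos)).tendsto.comp ?_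
    simpa using (tendsto_pow_atTop_nhds_zero_of_norm_lt_one hz).const_mul x
  have hlim := hmul.hasProd.tendsto_prod_nat.mul htail
  rw [mul_one] at hlim
  exact tendsto_nhds_unique hlim (tendsto_const_nhds.congr (eulerSeries_eq_prod_mul hz x))

end Normed

theorem one_le_prod_Icc_one_sub_neg_pow {t : ℝ} (ht₀ : 0 ≤ t) (ht : t ≤ 1 / 2) (j : ℕ) :
    1 ≤ ∏ k ∈ Icc 1 j, (1 - (-t) ^ k) := by
  -- The second invariant pays for the factor `1 - t^(j+1) < 1` that follows an odd `j`.
  suffices h : ∀ j, 1 ≤ ∏ k ∈ Icc 1 j, (1 - (-t) ^ k) ∧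
      1 - (-t) ^ j ≤ ∏ k ∈ Icc 1 j, (1 - (-t) ^ k) from (h j).1
  intro j
  induction j with
  | zero => simp
  | succ j ih =>
    obtain ⟨h₁, h₂⟩ := ih
    have hs : |(-t) ^ j| ≤ 1 := by
      rw [abs_pow, abs_neg, abs_of_nonneg ht₀]; exact pow_le_one₀ ht₀ (by linarith)
    obtain ⟨hs₁, hs₂⟩ := abs_le.mp hs
    rw [prod_Icc_succ_top (by omega), pow_succ]
    generalize ∏ k ∈ Icc 1 j, (1 - (-t) ^ k) = P at h₁ h₂ ⊢
    generalize (-t) ^ j = s at hs₁ hs₂ h₂ ⊢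
    have hfactor : 0 ≤ 1 - s * -t := by nlinarith
    refine ⟨?_, by nlinarith [mul_nonneg (sub_nonneg.2 h₁) hfactor]⟩
    rcases le_or_gt 0 s with hs | hs
    · nlinarith [mul_nonneg (sub_nonneg.2 h₁) hfactor, mul_nonneg ht₀ hs]
    · nlinarith [mul_nonneg (sub_nonneg.2 h₂) hfactor,
        mul_nonneg (neg_nonneg.2 hs.le) (by nlinarith : (0 : ℝ) ≤ 1 - t + t * s)]

theorem abs_eulerCoeff_neg_le {t : ℝ} (ht₀ : 0 ≤ t) (ht : t ≤ 1 / 2) (j : ℕ) :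
    |eulerCoeff (-t) j| ≤ t ^ (j + 1).choose 2 := by
  have hP := one_le_prod_Icc_one_sub_neg_pow ht₀ ht j
  rw [eulerCoeff, abs_div, abs_of_pos (zero_lt_one.trans_le hP), abs_pow, abs_neg,
    abs_of_nonneg ht₀]
  exact div_le_self (by positivity) hP

theorem Nat.choose_two_add_le_choose_two_add {n : ℕ} (hn : 1 ≤ n) (j : ℕ) :
    n.choose 2 + j ≤ (n + j).choose 2 := by
  induction j with
  | zero => rfl
  | succ j ih =>
    show n.choose 2 + j + 1 ≤ (n + j + 1).choose 2
    rw [Nat.succ_choose_two]; omega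

theorem one_div_pow_choose_two_add_le {q : ℝ} (hq : 2 ≤ q) {n : ℕ} (hn : 1 ≤ n) (j : ℕ) :
    1 / q ^ (n + j).choose 2 ≤ 1 / q ^ n.choose 2 * (1 / 2) ^ j := by
  rw [one_div_pow, div_mul_div_comm, one_mul, one_div_le_one_div (by positivity) (by positivity)]
  calc q ^ n.choose 2 * 2 ^ j ≤ q ^ n.choose 2 * q ^ j := by gcongr
    _ = q ^ (n.choose 2 + j) := (pow_add _ _ _).symm
    _ ≤ q ^ (n + j).choose 2 :=
      pow_le_pow_right₀ (by linarith) (Nat.choose_two_add_le_choose_two_add hn j)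

theorem summable_one_div_pow_choose_two_add {q : ℝ} (hq : 2 ≤ q) {n : ℕ} (hn : 1 ≤ n) :
    Summable fun j => 1 / q ^ (n + j).choose 2 :=
  .of_nonneg_of_le (fun j => by positivity) (one_div_pow_choose_two_add_le hq hn)
    (summable_geometric_two.mul_left _)

theorem tsum_one_div_pow_choose_two_add_le {q : ℝ} (hq : 2 ≤ q) {n : ℕ} (hn : 1 ≤ n) :
    ∑' j, 1 / q ^ (n + j).choose 2 ≤ 2 / q ^ n.choose 2 :=
  calc ∑' j, 1 / q ^ (n + j).choose 2 ≤ ∑' j : ℕ, 1 / q ^ n.choose 2 * (1 / 2) ^ j :=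
        (summable_one_div_pow_choose_two_add hq hn).tsum_le_tsum
          (one_div_pow_choose_two_add_le hq hn) (summable_geometric_two.mul_left _)
    _ = 2 / q ^ n.choose 2 := by rw [tsum_mul_left, tsum_geometric_two]; ring

theorem unitary_truncation_error_bound_general (q : ℝ) (hq : 2 ≤ q) (m n : ℕ) :
    |(∏' i : ℕ, (1 + 1 / (-q) ^ (i + 1))) -
        ∑ j ∈ Finset.range (n - m + 1),
          (-1 : ℝ) ^ ((j + 1).choose 2) /
            ∏ k ∈ Finset.Icc 1 j, (q ^ k - (-1 : ℝ) ^ k)| ≤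
      (∑' j : ℕ, 1 / q ^ ((n - m + 1 + j + 1).choose 2)) ∧
    (∑' j : ℕ, 1 / q ^ ((n - m + 1 + j + 1).choose 2)) ≤ 2 / q ^ ((n - m + 2).choose 2) := by
  set N := n - m
  have hq₀ : q ≠ 0 := by positivity
  have hz : ‖(-q)⁻¹‖ < 1 := by
    rw [norm_inv, norm_neg, Real.norm_of_nonneg (by positivity)]
    exact inv_lt_one_of_one_lt₀ (by linarith)
  have hprod : ∏' i : ℕ, (1 + 1 / (-q) ^ (i + 1)) = ∑' j, eulerCoeff (-q)⁻¹ j := by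
    have h := tprod_one_add_mul_pow hz 1
    simp only [eulerSeries, one_mul, one_pow, mul_one] at h
    simpa only [one_div, inv_pow] using h
  have hcoeff (j : ℕ) : |eulerCoeff (-q)⁻¹ j| ≤ 1 / q ^ (j + 1).choose 2 := by
    have h := abs_eulerCoeff_neg_le (inv_nonneg.2 (by positivity)) (by
      rw [one_div]; exact inv_anti₀ two_pos hq) j
    rw [← inv_neg, inv_pow] at h
    rwa [one_div]
  have hsum : Summable (eulerCoeff (-q)⁻¹) := by
    simpa using summable_eulerCoeff_mul_pow hz 1
  simp_rw [show ∀ j, N + 1 + j + 1 = N + 2 + j from fun j => by omega,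
    ← eulerCoeff_inv_neg hq₀, hprod]
  rw [← hsum.sum_add_tsum_nat_add (N + 1), add_sub_cancel_left]
  refine ⟨?_, tsum_one_div_pow_choose_two_add_le hq (by omega)⟩
  rw [← Real.norm_eq_abs]
  refine tsum_of_norm_bounded
    (summable_one_div_pow_choose_two_add hq (n := N + 2) (by omega)).hasSum fun j => ?_
  exact (hcoeff _).trans_eq (by rw [show j + (N + 1) + 1 = N + 2 + j by omega])

/-- For `q ≥ 2` and `n ≥ m ≥ 0`, the truncation error of the unitary Euler series
is at most `∑_{j ≥ n-m+1} q^{-\binom{j+1}{2}}`, which is at most `2 q^{-\binom{n-m+2}{2}}`. -/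
theorem unitary_truncation_error_bound (q : ℝ) (hq : 2 ≤ q) (m n : ℕ) (hmn : m ≤ n) :
    |(∏' i : ℕ, (1 + 1 / (-q) ^ (i + 1))) -
        ∑ j ∈ Finset.range (n - m + 1),
          (-1 : ℝ) ^ ((j + 1).choose 2) /
            ∏ k ∈ Finset.Icc 1 j, (q ^ k - (-1 : ℝ) ^ k)| ≤
      (∑' j : ℕ, 1 / q ^ ((n - m + 1 + j + 1).choose 2)) ∧
    (∑' j : ℕ, 1 / q ^ ((n - m + 1 + j + 1).choose 2)) ≤ 2 / q ^ ((n - m + 2).choose 2) :=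
  unitary_truncation_error_bound_general q hq m n
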